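/- arXiv:1002.1267 — 5 statements merged into one kernel-verified Lean document; each statement's English description precedes it below -/
import Mathlib

section
/- For every κ > 0 there is a constant C(κ) > 0 such that for every continuously differentiable function v : ℝ² → ℂ, ∫_{ℝ²} |v(y)|² e^{−κ|y|} dy ≤ C(κ) ( ∫_{ℝ²} |∇v(y)|² dy + ∫_{|y| ≤ 1} |v(y)|² e^{−|y|} dy ), the inequality being interpreted in [0,∞]. -/
/-!
Transport the problem to `ℝ × ℝ`, where `e^{-κ|y|} ≤ w(y₁) w(y₂)` with `w(t) = e^{-κ|t|/2}`.
For `x ∈ ℝ²` and `q` in the square `Q = [-1/2, 1/2]²`, walk from `q` to `x` first vertically and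
then horizontally; on each segment the fundamental theorem of calculus and Cauchy–Schwarz give
`|v(x)|² ≤ 3 (|v(q)|² + (1 + |x₂|) ∫ |∇v(q₁, t)|² dt + (1 + |x₁|) ∫ |∇v(s, x₂)|² ds)`.
Integrating against `w(x₁) w(x₂)` and averaging over `q ∈ Q`, Tonelli bounds the weighted norm
by `∫_Q |v|²` and `∫ |∇v|²` times moments of `w`, which are finite. Finally `Q` lies in the unit
disc, where `e^{-|y|} ≥ e^{-1}`.
-/

open MeasureTheory
open scoped ENNReal NNReal

noncomputable section

abbrev E2 := EuclideanSpace ℝ (Fin 2)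

open Set Metric Real

theorem sq_lintegral_le_measure_univ_mul_lintegral_sq {α : Type*} [MeasurableSpace α]
    {μ : Measure α} {f : α → ℝ≥0∞} (hf : AEMeasurable f μ) :
    (∫⁻ x, f x ∂μ) ^ 2 ≤ μ univ * ∫⁻ x, f x ^ 2 ∂μ := by
  have h := ENNReal.lintegral_mul_le_Lp_mul_Lq μ Real.HolderConjugate.two_two hf
    (aemeasurable_const (b := (1 : ℝ≥0∞)))
  simp only [Pi.mul_apply, mul_one, ENNReal.one_rpow, lintegral_const, one_mul] at h
  calc (∫⁻ x, f x ∂μ) ^ 2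
      ≤ ((∫⁻ x, f x ^ (2 : ℝ) ∂μ) ^ (1 / (2 : ℝ)) * μ univ ^ (1 / (2 : ℝ))) ^ (2 : ℝ) := by
        rw [ENNReal.rpow_two]; gcongr
    _ = μ univ * ∫⁻ x, f x ^ 2 ∂μ := by
        rw [ENNReal.mul_rpow_of_nonneg _ _ zero_le_two, ← ENNReal.rpow_mul, ← ENNReal.rpow_mul]
        norm_num [mul_comm]

theorem enorm_add_add_sq_le {E : Type*} [SeminormedAddCommGroup E] (a b c : E) :
    ‖a + b + c‖ₑ ^ 2 ≤ 3 * (‖a‖ₑ ^ 2 + ‖b‖ₑ ^ 2 + ‖c‖ₑ ^ 2) := by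
  have h := norm_add₃_le (a := a) (b := b) (c := c)
  have hsq : ‖a + b + c‖ ^ 2 ≤ 3 * (‖a‖ ^ 2 + ‖b‖ ^ 2 + ‖c‖ ^ 2) := by
    nlinarith [norm_nonneg (a + b + c), sq_nonneg (‖a‖ - ‖b‖), sq_nonneg (‖b‖ - ‖c‖),
      sq_nonneg (‖a‖ - ‖c‖)]
  simp only [← ofReal_norm, ← ENNReal.ofReal_pow (norm_nonneg _)]
  rw [← ENNReal.ofReal_add (by positivity) (by positivity),
    ← ENNReal.ofReal_add (by positivity) (by positivity), ← ENNReal.ofReal_ofNat 3,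
    ← ENNReal.ofReal_mul (by norm_num)]
  exact ENNReal.ofReal_le_ofReal hsq

theorem integrable_comp_abs_of_integrableOn_Ioi {f : ℝ → ℝ} (hf : IntegrableOn f (Ioi 0)) :
    Integrable fun t => f |t| := by
  have hpos : IntegrableOn (fun t => f |t|) (Ioi 0) :=
    hf.congr_fun (fun t ht => by rw [abs_of_pos ht]) measurableSet_Ioi
  have hneg : IntegrableOn (fun t => f |t|) (Iic 0) := by
    rw [integrableOn_Iic_iff_integrableOn_Iio]
    have h : IntegrableOn (fun t => f |t|) (Ioi (-0)) := by rwa [neg_zero]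
    simpa only [abs_neg] using h.comp_neg_Iio
  rw [← integrableOn_univ, ← Iic_union_Ioi (a := (0 : ℝ))]
  exact hneg.union hpos

theorem lintegral_volume_prod_mul {α β : Type*} [MeasureSpace α] [MeasureSpace β]
    [SFinite (volume : Measure β)] {f : α → ℝ≥0∞} {g : β → ℝ≥0∞} (hf : Measurable f)
    (hg : Measurable g) :
    ∫⁻ x : α × β, f x.1 * g x.2 = (∫⁻ a, f a) * ∫⁻ b, g b := by
  rw [Measure.volume_eq_prod, lintegral_prod_mul hf.aemeasurable hg.aemeasurable]

theorem setLIntegral_prod_fst {α β : Type*} [MeasureSpace α] [MeasureSpace β]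
    [SFinite (volume : Measure α)] [SFinite (volume : Measure β)] {f : α → ℝ≥0∞}
    (hf : Measurable f) (s : Set α) (t : Set β) :
    ∫⁻ x in s ×ˢ t, f x.1 = (∫⁻ a in s, f a) * volume t := by
  rw [Measure.volume_eq_prod, ← Measure.prod_restrict]
  simpa using lintegral_prod_mul (μ := volume.restrict s) (ν := volume.restrict t)
    hf.aemeasurable (aemeasurable_const (b := (1 : ℝ≥0∞)))

variable {E : Type*} [NormedAddCommGroup E] [NormedSpace ℝ E]

theorem enorm_sub_sq_le_mul_lintegral_deriv_sq {f : ℝ → E} (hf : ContDiff ℝ 1 f) (a b : ℝ) :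
    ‖f b - f a‖ₑ ^ 2 ≤ ENNReal.ofReal |b - a| * ∫⁻ t in uIcc a b, ‖deriv f t‖ₑ ^ 2 := by
  wlog hab : a ≤ b generalizing a b
  · simpa only [enorm_sub_rev, abs_sub_comm, uIcc_comm] using this b a (le_of_not_ge hab)
  have hf' : Continuous fun t => ‖deriv f t‖ₑ := (hf.continuous_deriv le_rfl).enorm
  calc ‖f b - f a‖ₑ ^ 2 ≤ (∫⁻ t in Icc a b, ‖deriv f t‖ₑ) ^ 2 := by
        gcongr; exact enorm_sub_le_lintegral_deriv_of_contDiffOn_Icc hf.contDiffOn hab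
    _ ≤ volume (Icc a b) * ∫⁻ t in Icc a b, ‖deriv f t‖ₑ ^ 2 := by
        simpa only [Measure.restrict_apply_univ] using
          sq_lintegral_le_measure_univ_mul_lintegral_sq (μ := volume.restrict (Icc a b))
            hf'.measurable.aemeasurable
    _ = _ := by rw [Real.volume_Icc, uIcc_of_le hab, abs_of_nonneg (sub_nonneg.2 hab)]

theorem enorm_sub_sq_le_lintegral_fderiv_line {F : Type*} [NormedAddCommGroup F]
    [NormedSpace ℝ F] {u : F → E} (hu : ContDiff ℝ 1 u) (p d : F) (hd : ‖d‖ ≤ 1) (a b : ℝ) :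
    ‖u (p + b • d) - u (p + a • d)‖ₑ ^ 2 ≤
      ENNReal.ofReal |b - a| * ∫⁻ t : ℝ, ‖fderiv ℝ u (p + t • d)‖ₑ ^ 2 := by
  have hderiv (t : ℝ) : HasDerivAt (fun s : ℝ => u (p + s • d)) (fderiv ℝ u (p + t • d) d) t := by
    simpa [Function.comp_def] using (hu.differentiable one_ne_zero _).hasFDerivAt.comp_hasDerivAt t
      (((hasDerivAt_id t).smul_const d).const_add p)
  refine (enorm_sub_sq_le_mul_lintegral_deriv_sq (f := fun s : ℝ => u (p + s • d))
    (hu.comp (contDiff_const.add (contDiff_id.smul contDiff_const))) a b).trans ?_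
  refine mul_le_mul_right ((setLIntegral_le_lintegral _ _).trans (lintegral_mono fun t => ?_)) _
  rw [(hderiv t).deriv]
  gcongr
  calc ‖fderiv ℝ u (p + t • d) d‖ₑ ≤ ‖fderiv ℝ u (p + t • d)‖ₑ * ‖d‖ₑ :=
        (fderiv ℝ u (p + t • d)).le_opENorm d
    _ ≤ ‖fderiv ℝ u (p + t • d)‖ₑ :=
        mul_le_of_le_one_right' (by simpa [← ofReal_norm] using ENNReal.ofReal_le_ofReal hd)

section Plane

variable {u : ℝ × ℝ → E} {w : ℝ → ℝ≥0∞}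

theorem enorm_sq_le_of_norm_le_one (hu : ContDiff ℝ 1 u) (x : ℝ × ℝ) {q : ℝ × ℝ} (hq : ‖q‖ ≤ 1) :
    ‖u x‖ₑ ^ 2 ≤ 3 * (‖u q‖ₑ ^ 2
      + ENNReal.ofReal (|x.2| + 1) * (∫⁻ t, ‖fderiv ℝ u (q.1, t)‖ₑ ^ 2)
      + ENNReal.ofReal (|x.1| + 1) * ∫⁻ s, ‖fderiv ℝ u (s, x.2)‖ₑ ^ 2) := by
  have hvert := enorm_sub_sq_le_lintegral_fderiv_line hu (q.1, 0) (0, 1) (by simp) q.2 x.2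
  have hhor := enorm_sub_sq_le_lintegral_fderiv_line hu (0, x.2) (1, 0) (by simp) q.1 x.1
  simp only [Prod.smul_mk, smul_eq_mul, mul_zero, mul_one, Prod.mk_add_mk, add_zero,
    zero_add] at hvert hhor
  have hlen (a b : ℝ) (ha : ‖a‖ ≤ 1) : ENNReal.ofReal |b - a| ≤ ENNReal.ofReal (|b| + 1) :=
    ENNReal.ofReal_le_ofReal ((abs_sub b a).trans (by rw [← Real.norm_eq_abs a]; linarith))
  calc ‖u x‖ₑ ^ 2
      = ‖u q + (u (q.1, x.2) - u (q.1, q.2)) + (u (x.1, x.2) - u (q.1, x.2))‖ₑ ^ 2 := by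
        congr 2; abel
    _ ≤ _ := enorm_add_add_sq_le _ _ _
    _ ≤ _ := by
        gcongr 3 * (_ + ?_ + ?_)
        · exact hvert.trans (mul_le_mul_left (hlen _ _ ((norm_snd_le q).trans hq)) _)
        · exact hhor.trans (mul_le_mul_left (hlen _ _ ((norm_fst_le q).trans hq)) _)

theorem measurable_enorm_fderiv_sq (hu : ContDiff ℝ 1 u) :
    Measurable fun p => ‖fderiv ℝ u p‖ₑ ^ 2 :=
  ((hu.continuous_fderiv one_ne_zero).enorm.measurable).pow_const 2

theorem lintegral_enorm_sq_mul_weight_le_of_norm_le_one (hu : ContDiff ℝ 1 u)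
    (hw : Measurable w) (hw_le : ∀ t, w t ≤ 1) {q : ℝ × ℝ} (hq : ‖q‖ ≤ 1) :
    ∫⁻ x, ‖u x‖ₑ ^ 2 * (w x.1 * w x.2) ≤
      3 * ((∫⁻ t, ENNReal.ofReal (|t| + 1) * w t) ^ 2 *
          (‖u q‖ₑ ^ 2 + ∫⁻ t, ‖fderiv ℝ u (q.1, t)‖ₑ ^ 2)
        + (∫⁻ t, ENNReal.ofReal (|t| + 1) * w t) * ∫⁻ p, ‖fderiv ℝ u p‖ₑ ^ 2) := by
  set ρ : ℝ → ℝ≥0∞ := fun t => ENNReal.ofReal (|t| + 1)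
  set A := ∫⁻ t, ρ t * w t
  set D := fun p => ‖fderiv ℝ u p‖ₑ ^ 2
  set H := ∫⁻ t, D (q.1, t)
  set F := fun t => ∫⁻ s, D (s, t)
  have hρ : Measurable ρ := by fun_prop
  have hD : Measurable D := measurable_enorm_fderiv_sq hu
  have hF : Measurable F := hD.lintegral_prod_left'
  have hB : ∫⁻ t, w t ≤ A :=
    lintegral_mono fun t => le_mul_of_one_le_left' (ENNReal.one_le_ofReal.2 (by simp))
  have hwF : ∫⁻ t, w t * F t ≤ ∫⁻ p, D p := by
    rw [Measure.volume_eq_prod, lintegral_prod_symm' _ hD]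
    exact lintegral_mono fun t => mul_le_of_le_one_left' (hw_le t)
  calc ∫⁻ x, ‖u x‖ₑ ^ 2 * (w x.1 * w x.2)
      ≤ ∫⁻ x : ℝ × ℝ, 3 * (‖u q‖ₑ ^ 2 * (w x.1 * w x.2) + H * (w x.1 * (ρ x.2 * w x.2))
          + (ρ x.1 * w x.1) * (w x.2 * F x.2)) := by
        -- each summand is a product `f x.1 * g x.2`, ready for Tonelli
        refine lintegral_mono fun x => ?_
        refine (mul_le_mul_left (enorm_sq_le_of_norm_le_one hu x hq) _).trans_eq ?_
        dsimp only [ρ, H, F, D]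
        ring
    _ = 3 * (‖u q‖ₑ ^ 2 * ((∫⁻ t, w t) * ∫⁻ t, w t) + H * ((∫⁻ t, w t) * A)
          + A * ∫⁻ t, w t * F t) := by
        rw [lintegral_const_mul _ (by fun_prop), lintegral_add_left (by fun_prop),
          lintegral_add_left (by fun_prop), lintegral_const_mul _ (by fun_prop),
          lintegral_const_mul _ (by fun_prop), lintegral_volume_prod_mul hw hw,
          lintegral_volume_prod_mul (g := fun t => ρ t * w t) hw (hρ.mul hw),
          lintegral_volume_prod_mul (f := fun t => ρ t * w t) (g := fun t => w t * F t)
            (hρ.mul hw) (hw.mul hF)]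
    _ ≤ 3 * (A ^ 2 * (‖u q‖ₑ ^ 2 + H) + A * ∫⁻ p, D p) := by
        calc _ ≤ 3 * (‖u q‖ₑ ^ 2 * (A * A) + H * (A * A) + A * ∫⁻ p, D p) := by gcongr
          _ = _ := by ring

theorem lintegral_enorm_sq_mul_weight_le (hu : ContDiff ℝ 1 u)
    (hw : Measurable w) (hw_le : ∀ t, w t ≤ 1) :
    ∫⁻ x, ‖u x‖ₑ ^ 2 * (w x.1 * w x.2) ≤
      3 * (∫⁻ t, ENNReal.ofReal (|t| + 1) * w t) *
        ((∫⁻ t, ENNReal.ofReal (|t| + 1) * w t) * (∫⁻ q in closedBall 0 (1 / 2), ‖u q‖ₑ ^ 2)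
          + ((∫⁻ t, ENNReal.ofReal (|t| + 1) * w t) + 1) * ∫⁻ p, ‖fderiv ℝ u p‖ₑ ^ 2) := by
  set A := ∫⁻ t, ENNReal.ofReal (|t| + 1) * w t
  set D := fun p => ‖fderiv ℝ u p‖ₑ ^ 2
  set H := fun a => ∫⁻ t, D (a, t)
  set I := closedBall (0 : ℝ) (1 / 2)
  set Q := closedBall (0 : ℝ × ℝ) (1 / 2)
  have hQ : Q = I ×ˢ I := (closedBall_prod_same 0 0 _).symm
  have hI : volume I = 1 := by rw [Real.volume_closedBall]; norm_num
  have hQ_vol : volume Q = 1 := by rw [hQ, Measure.volume_eq_prod, Measure.prod_prod, hI, one_mul]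
  have hD : Measurable D := measurable_enorm_fderiv_sq hu
  have hH : Measurable H := hD.lintegral_prod_right'
  have hu2 : Measurable fun q => ‖u q‖ₑ ^ 2 := (hu.continuous.enorm.measurable).pow_const 2
  have hQH : ∫⁻ q in Q, H q.1 ≤ ∫⁻ p, D p := by
    calc ∫⁻ q in Q, H q.1 = ∫⁻ a in I, H a := by rw [hQ, setLIntegral_prod_fst hH, hI, mul_one]
      _ ≤ ∫⁻ a, H a := setLIntegral_le_lintegral _ _
      _ = ∫⁻ p, D p := by rw [Measure.volume_eq_prod, lintegral_prod _ hD.aemeasurable]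
  -- in the sup norm of `ℝ × ℝ`, `Q` is the square `[-1/2, 1/2]²`, of area `1`
  calc ∫⁻ x, ‖u x‖ₑ ^ 2 * (w x.1 * w x.2)
      = ∫⁻ _ in Q, ∫⁻ x, ‖u x‖ₑ ^ 2 * (w x.1 * w x.2) := by
        rw [setLIntegral_const, hQ_vol, mul_one]
    _ ≤ ∫⁻ q in Q, 3 * (A ^ 2 * (‖u q‖ₑ ^ 2 + H q.1) + A * ∫⁻ p, D p) :=
        setLIntegral_mono (by fun_prop) fun q hq =>
          lintegral_enorm_sq_mul_weight_le_of_norm_le_one hu hw hw_le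
            ((mem_closedBall_zero_iff.1 hq).trans (by norm_num))
    _ = 3 * (A ^ 2 * ((∫⁻ q in Q, ‖u q‖ₑ ^ 2) + ∫⁻ q in Q, H q.1) + A * ∫⁻ p, D p) := by
        rw [lintegral_const_mul _ (by fun_prop), lintegral_add_right _ measurable_const,
          lintegral_const_mul _ (by fun_prop), lintegral_add_left hu2, setLIntegral_const,
          hQ_vol, mul_one]
    _ ≤ 3 * (A ^ 2 * ((∫⁻ q in Q, ‖u q‖ₑ ^ 2) + ∫⁻ p, D p) + A * ∫⁻ p, D p) := by gcongr
    _ = _ := by ring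

end Plane

/-- The constant `A` of `lintegral_enorm_sq_mul_weight_le` for the weight `t ↦ e^{-c|t|}`. -/
def weightMoment (c : ℝ) : ℝ≥0∞ :=
  ∫⁻ t, ENNReal.ofReal (|t| + 1) * ENNReal.ofReal (rexp (-(c * |t|)))

theorem weightMoment_lt_top {c : ℝ} (hc : 0 < c) : weightMoment c < ∞ := by
  have h : IntegrableOn (fun t => (t + 1) * rexp (-(c * t))) (Ioi 0) := by
    have h1 := integrableOn_rpow_mul_exp_neg_mul_rpow (s := 1) (p := 1) (by norm_num) one_pos hc
    have h2 := exp_neg_integrableOn_Ioi 0 hc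
    refine (h1.add h2).congr_fun (fun t _ => ?_) measurableSet_Ioi
    simp only [rpow_one, Pi.add_apply]
    ring_nf
  calc weightMoment c = ∫⁻ t, ENNReal.ofReal ((|t| + 1) * rexp (-(c * |t|))) :=
        lintegral_congr fun t => (ENNReal.ofReal_mul (by positivity)).symm
    _ < ∞ := (integrable_comp_abs_of_integrableOn_Ioi h).lintegral_lt_top

/-- Not an isometry: `ℝ × ℝ` carries the sup norm. -/
def prodEquivE2 : (ℝ × ℝ) ≃L[ℝ] E2 :=
  (ContinuousLinearEquiv.finTwoArrow ℝ ℝ).symm.trans (EuclideanSpace.equiv (Fin 2) ℝ).symm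

theorem measurePreserving_prodEquivE2 : MeasurePreserving prodEquivE2 :=
  (PiLp.volume_preserving_toLp (Fin 2)).comp (volume_preserving_finTwoArrow ℝ).symm

theorem lintegral_comp_prodEquivE2 (f : E2 → ℝ≥0∞) : ∫⁻ p, f (prodEquivE2 p) = ∫⁻ y, f y :=
  measurePreserving_prodEquivE2.lintegral_comp_emb prodEquivE2.toHomeomorph.measurableEmbedding f

theorem norm_le_norm_prodEquivE2 (p : ℝ × ℝ) : ‖p‖ ≤ ‖prodEquivE2 p‖ :=
  max_le (PiLp.norm_apply_le (prodEquivE2 p) 0) (PiLp.norm_apply_le (prodEquivE2 p) 1)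

theorem norm_prodEquivE2_le (p : ℝ × ℝ) : ‖prodEquivE2 p‖ ≤ 2 * ‖p‖ := by
  rw [EuclideanSpace.norm_eq, Real.sqrt_le_iff]
  refine ⟨by positivity, ?_⟩
  have h1 : ‖p.1‖ ≤ ‖p‖ := norm_fst_le p
  have h2 : ‖p.2‖ ≤ ‖p‖ := norm_snd_le p
  simp only [Fin.sum_univ_two]
  change ‖p.1‖ ^ 2 + ‖p.2‖ ^ 2 ≤ (2 * ‖p‖) ^ 2
  nlinarith [norm_nonneg p.1, norm_nonneg p.2]

theorem exp_neg_mul_norm_prodEquivE2_le {κ : ℝ} (hκ : 0 ≤ κ) (p : ℝ × ℝ) :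
    rexp (-κ * ‖prodEquivE2 p‖) ≤ rexp (-(κ / 2 * |p.1|)) * rexp (-(κ / 2 * |p.2|)) := by
  rw [← exp_add, exp_le_exp]
  have h1 : |p.1| ≤ ‖prodEquivE2 p‖ := (norm_fst_le p).trans (norm_le_norm_prodEquivE2 p)
  have h2 : |p.2| ≤ ‖prodEquivE2 p‖ := (norm_snd_le p).trans (norm_le_norm_prodEquivE2 p)
  nlinarith

theorem lintegral_enorm_fderiv_comp_prodEquivE2_sq_le (v : E2 → E) :
    ∫⁻ p, ‖fderiv ℝ (v ∘ prodEquivE2) p‖ₑ ^ 2 ≤ 4 * ∫⁻ y, ‖fderiv ℝ v y‖ₑ ^ 2 := by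
  have he : ‖(prodEquivE2 : (ℝ × ℝ) →L[ℝ] E2)‖ₑ ≤ 2 := by
    simpa [← ofReal_norm] using ENNReal.ofReal_le_ofReal
      (ContinuousLinearMap.opNorm_le_bound _ zero_le_two norm_prodEquivE2_le)
  rw [← lintegral_comp_prodEquivE2, ← lintegral_const_mul' _ _ (by norm_num)]
  refine lintegral_mono fun p => ?_
  rw [prodEquivE2.comp_right_fderiv]
  calc ‖(fderiv ℝ v (prodEquivE2 p)).comp (prodEquivE2 : (ℝ × ℝ) →L[ℝ] E2)‖ₑ ^ 2
      ≤ (‖fderiv ℝ v (prodEquivE2 p)‖ₑ * 2) ^ 2 := by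
        gcongr
        exact (ContinuousLinearMap.opENorm_comp_le _ _).trans (by gcongr)
    _ = 4 * ‖fderiv ℝ v (prodEquivE2 p)‖ₑ ^ 2 := by ring

theorem setLIntegral_closedBall_comp_prodEquivE2_le (g : E2 → ℝ≥0∞) :
    ∫⁻ q in closedBall 0 (1 / 2), g (prodEquivE2 q) ≤
      ENNReal.ofReal (rexp 1) * ∫⁻ y in {y : E2 | ‖y‖ ≤ 1}, g y * ENNReal.ofReal (rexp (-‖y‖)) := by
  have hsub : closedBall 0 (1 / 2) ⊆ prodEquivE2 ⁻¹' {y : E2 | ‖y‖ ≤ 1} := fun q hq => by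
    have := norm_prodEquivE2_le q
    rw [mem_closedBall_zero_iff] at hq
    change ‖prodEquivE2 q‖ ≤ 1
    linarith
  rw [← measurePreserving_prodEquivE2.setLIntegral_comp_preimage_emb
    prodEquivE2.toHomeomorph.measurableEmbedding, ← lintegral_const_mul' _ _ ENNReal.ofReal_ne_top]
  refine (setLIntegral_mono' measurableSet_closedBall fun q hq => ?_).trans
    (lintegral_mono_set hsub)
  have h1 : 1 ≤ ENNReal.ofReal (rexp 1) * ENNReal.ofReal (rexp (-‖prodEquivE2 q‖)) := by
    rw [← ENNReal.ofReal_mul (exp_nonneg _), ← exp_add]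
    exact ENNReal.one_le_ofReal.2 (one_le_exp (by linarith [show ‖prodEquivE2 q‖ ≤ 1 from hsub hq]))
  calc g (prodEquivE2 q)
      ≤ ENNReal.ofReal (rexp 1) * ENNReal.ofReal (rexp (-‖prodEquivE2 q‖)) * g (prodEquivE2 q) :=
        le_mul_of_one_le_left' h1
    _ = _ := by ring

theorem lintegral_enorm_sq_mul_exp_le {v : E2 → E} (hv : ContDiff ℝ 1 v) {κ : ℝ} (hκ : 0 ≤ κ) :
    ∫⁻ y, ‖v y‖ₑ ^ 2 * ENNReal.ofReal (rexp (-κ * ‖y‖)) ≤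
      12 * ENNReal.ofReal (rexp 1) * (weightMoment (κ / 2) + 1) ^ 2 *
        ((∫⁻ y, ‖fderiv ℝ v y‖ₑ ^ 2) +
          ∫⁻ y in {y : E2 | ‖y‖ ≤ 1}, ‖v y‖ₑ ^ 2 * ENNReal.ofReal (rexp (-‖y‖))) := by
  set u := v ∘ prodEquivE2
  set w : ℝ → ℝ≥0∞ := fun t => ENNReal.ofReal (rexp (-(κ / 2 * |t|)))
  set A := weightMoment (κ / 2)
  set e := ENNReal.ofReal (rexp 1)
  set G := ∫⁻ y, ‖fderiv ℝ v y‖ₑ ^ 2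
  set Ball := ∫⁻ y in {y : E2 | ‖y‖ ≤ 1}, ‖v y‖ₑ ^ 2 * ENNReal.ofReal (rexp (-‖y‖))
  have hu : ContDiff ℝ 1 u := hv.comp prodEquivE2.contDiff
  have hw : Measurable w := by fun_prop
  have hw_le (t : ℝ) : w t ≤ 1 :=
    ENNReal.ofReal_le_one.2 (exp_le_one_iff.2 (by have := abs_nonneg t; nlinarith))
  have he : 1 ≤ e := ENNReal.one_le_ofReal.2 (one_le_exp zero_le_one)
  calc ∫⁻ y, ‖v y‖ₑ ^ 2 * ENNReal.ofReal (rexp (-κ * ‖y‖))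
      = ∫⁻ p, ‖u p‖ₑ ^ 2 * ENNReal.ofReal (rexp (-κ * ‖prodEquivE2 p‖)) :=
        (lintegral_comp_prodEquivE2 _).symm
    _ ≤ ∫⁻ p, ‖u p‖ₑ ^ 2 * (w p.1 * w p.2) := lintegral_mono fun p => by
        gcongr
        rw [← ENNReal.ofReal_mul (exp_nonneg _)]
        exact ENNReal.ofReal_le_ofReal (exp_neg_mul_norm_prodEquivE2_le hκ p)
    _ ≤ 3 * A * (A * (∫⁻ q in closedBall 0 (1 / 2), ‖u q‖ₑ ^ 2)
          + (A + 1) * ∫⁻ p, ‖fderiv ℝ u p‖ₑ ^ 2) :=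
        lintegral_enorm_sq_mul_weight_le hu hw hw_le
    _ ≤ 3 * A * (A * (e * Ball) + (A + 1) * (4 * G)) := by
        gcongr
        · exact setLIntegral_closedBall_comp_prodEquivE2_le fun y => ‖v y‖ₑ ^ 2
        · exact lintegral_enorm_fderiv_comp_prodEquivE2_sq_le v
    _ ≤ 3 * (A + 1) * ((A + 1) * (e * (4 * Ball)) + (A + 1) * (4 * e * G)) := by
        gcongr
        · exact le_self_add
        · exact le_self_add
        · exact le_mul_of_one_le_left' (by norm_num)
        · exact le_mul_of_one_le_right' he
    _ = 12 * e * (A + 1) ^ 2 * (G + Ball) := by ring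

/-- Weighted `L²` estimate: for every `κ > 0` there is `C(κ) > 0` such that
`∫ |v|² e^{-κ|y|} ≤ C(κ) (∫ |∇v|² + ∫_{|y|≤1} |v|² e^{-|y|})` for all `C¹`
functions `v : ℝ² → ℂ`, the inequality interpreted in `[0,∞]`. -/
theorem weighted_L2_by_gradient (κ : ℝ) (hκ : 0 < κ) :
    ∃ C : ℝ, 0 < C ∧ ∀ v : E2 → ℂ, ContDiff ℝ 1 v →
      (∫⁻ y : E2, (‖v y‖₊ : ℝ≥0∞) ^ 2 * ENNReal.ofReal (Real.exp (-κ * ‖y‖)))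
        ≤ ENNReal.ofReal C *
          ((∫⁻ y : E2, (‖fderiv ℝ v y‖₊ : ℝ≥0∞) ^ 2) +
            ∫⁻ y in {y : E2 | ‖y‖ ≤ 1},
              (‖v y‖₊ : ℝ≥0∞) ^ 2 * ENNReal.ofReal (Real.exp (-‖y‖))) := by
  set A := weightMoment (κ / 2)
  have hA : A ≠ ∞ := (weightMoment_lt_top (half_pos hκ)).ne
  refine ⟨12 * rexp 1 * (A.toReal + 1) ^ 2, by positivity, fun v hv => ?_⟩
  have hC : ENNReal.ofReal (12 * rexp 1 * (A.toReal + 1) ^ 2)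
      = 12 * ENNReal.ofReal (rexp 1) * (A + 1) ^ 2 := by
    rw [ENNReal.ofReal_mul (by positivity), ENNReal.ofReal_mul (by positivity),
      ENNReal.ofReal_pow (by positivity), ENNReal.ofReal_add ENNReal.toReal_nonneg zero_le_one,
      ENNReal.ofReal_toReal hA, ENNReal.ofReal_one, ENNReal.ofReal_ofNat]
  simp only [← enorm_eq_nnnorm, hC]
  exact lintegral_enorm_sq_mul_exp_le hv hκ.le
end
end

section
/- For every Schwartz function v : ℝ² → ℂ one has the Pohozaev-type identity Re ∫_{ℝ²} (Δv(y) + v(y)|v(y)|²) · conj( v(y) + y·∇v(y) ) dy = − ∫_{ℝ²} |∇v(y)|² dy + (1/2) ∫_{ℝ²} |v(y)|⁴ dy. -/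
/-!
Write `Λv = v + y·∇v`, so that `conj (Λv) = conj v + ∑ᵢ yᵢ conj (∂ᵢv)`, and compute every piece
by integration by parts against the two identities `2 Re (g · conj (∂ᵢg)) = ∂ᵢ|g|²` and
`∫ yᵢ ∂ⱼF = -δᵢⱼ ∫ F`. One gets `Re ∫ Δv conj v = -∫ |∇v|²` and
`Re ∫ ∂ⱼ²v · yᵢ conj (∂ᵢv) = (1/2 - δᵢⱼ) ∫ |∂ⱼv|²`, hence in dimension `d`
`Re ∫ Δv conj (Λv) = (d/2 - 2) ∫ |∇v|²`. Since `v|v|² conj (∂ᵢv)` is half of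
`v² conj (∂ᵢ(v²))` and `|v²|² = |v|⁴`, also `Re ∫ v|v|² conj (Λv) = (1 - d/4) ∫ |v|⁴`. For `d = 2`
the two coefficients are `-1` and `1/2`.
-/

open MeasureTheory

noncomputable section

/-- The partial derivative `∂f/∂yᵢ` of a complex-valued function on `ℝ²`. -/
def pdC (i : Fin 2) (f : E2 → ℂ) (y : E2) : ℂ :=
  fderiv ℝ f y (EuclideanSpace.single i 1)

/-- The Laplacian on `ℝ²`. -/
def lapC (f : E2 → ℂ) (y : E2) : ℂ :=
  ∑ i, pdC i (pdC i f) y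

open ComplexConjugate LineDeriv Laplacian

theorem integral_mul_conj_self {X : Type*} [MeasurableSpace X] (μ : Measure X) (g : X → ℂ) :
    ∫ x, g x * conj (g x) ∂μ = ((∫ x, ‖g x‖ ^ 2 ∂μ : ℝ) : ℂ) := by
  simp [Complex.mul_conj', ← integral_complex_ofReal]

namespace SchwartzMap

variable {D E F G : Type*} [NormedAddCommGroup D] [NormedSpace ℝ D]
  [NormedAddCommGroup E] [NormedSpace ℝ E] [NormedAddCommGroup F] [NormedSpace ℝ F]
  [NormedAddCommGroup G] [NormedSpace ℝ G]

theorem lineDerivOp_postcompCLM (L : F →L[ℝ] G) (f : 𝓢(D, F)) (m : D) :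
    ∂_{m} (postcompCLM L f) = postcompCLM L (∂_{m} f) := by
  ext x
  simp only [lineDerivOp_apply_eq_fderiv, postcompCLM_apply]
  exact congrArg (· m) (L.hasFDerivAt.comp x (f.hasFDerivAt x)).fderiv

theorem lineDerivOp_pairing (B : E →L[ℝ] F →L[ℝ] G) (f : 𝓢(D, E)) (g : 𝓢(D, F)) (m : D) :
    ∂_{m} (pairing B f g) = pairing B (∂_{m} f) g + pairing B f (∂_{m} g) := by
  ext x
  simp only [lineDerivOp_apply_eq_fderiv, add_apply, pairing_apply_apply, pairing_apply]
  rw [(B.hasFDerivAt_of_bilinear (f.hasFDerivAt x) (g.hasFDerivAt x)).fderiv]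
  simp [add_comm]

theorem lineDerivOp_smulLeftCLM (ℓ : D →L[ℝ] ℝ) (f : 𝓢(D, F)) (m : D) :
    ∂_{m} (smulLeftCLM F ℓ f) = ℓ m • f + smulLeftCLM F ℓ (∂_{m} f) := by
  ext x
  simp only [lineDerivOp_apply_eq_fderiv, add_apply, smul_apply,
    smulLeftCLM_apply_apply ℓ.hasTemperateGrowth, smulLeftCLM_apply ℓ.hasTemperateGrowth]
  rw [(ℓ.hasFDerivAt.fun_smul (f.hasFDerivAt x)).fderiv]
  simp [add_comm]

theorem lineDerivOp_comm (f : 𝓢(D, F)) (u w : D) : ∂_{u} (∂_{w} f) = ∂_{w} (∂_{u} f) := by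
  have hsnd (a b x : D) : ∂_{a} (∂_{b} f) x = fderiv ℝ (fderiv ℝ f) x a b := by
    have hcoe : ⇑(∂_{b} f : 𝓢(D, F)) = fun y ↦ fderiv ℝ f y b := rfl
    rw [lineDerivOp_apply_eq_fderiv, hcoe, fderiv_clm_apply (c := fderiv ℝ f)
      (fderivCLM ℝ D F f).differentiableAt (differentiableAt_const b)]
    simp
  ext x
  rw [hsnd, hsnd, ((f.smooth 2).contDiffAt.isSymmSndFDerivAt (by simp)).eq]

instance : Star 𝓢(D, ℂ) := ⟨postcompCLM (Complex.conjCLE : ℂ →L[ℝ] ℂ)⟩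

instance : Mul 𝓢(D, ℂ) := ⟨fun f g ↦ pairing (ContinuousLinearMap.mul ℝ ℂ) f g⟩

@[simp] theorem star_apply (f : 𝓢(D, ℂ)) (x : D) : (star f) x = conj (f x) := rfl

@[simp] theorem mul_apply (f g : 𝓢(D, ℂ)) (x : D) : (f * g) x = f x * g x := rfl

theorem mul_mul_star_self_apply (v : 𝓢(D, ℂ)) (x : D) :
    (v * (v * star v)) x = v x * (‖v x‖ : ℂ) ^ 2 := by
  simp [Complex.mul_conj']

theorem lineDerivOp_star (f : 𝓢(D, ℂ)) (m : D) : ∂_{m} (star f) = star (∂_{m} f) :=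
  lineDerivOp_postcompCLM _ f m

theorem lineDerivOp_mul (f g : 𝓢(D, ℂ)) (m : D) :
    ∂_{m} (f * g) = ∂_{m} f * g + f * ∂_{m} g :=
  lineDerivOp_pairing _ f g m

variable [MeasurableSpace D] [BorelSpace D] [FiniteDimensional ℝ D]
  {μ : Measure D} [μ.IsAddHaarMeasure]

theorem integrable_clm_smul (ℓ : D →L[ℝ] ℝ) (f : 𝓢(D, F)) :
    Integrable (fun x ↦ ℓ x • f x) μ := by
  have := (smulLeftCLM F ℓ f).integrable (μ := μ)
  rwa [smulLeftCLM_apply ℓ.hasTemperateGrowth] at this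

theorem integrable_mul_conj (f g : 𝓢(D, ℂ)) : Integrable (fun x ↦ f x * conj (g x)) μ :=
  (f * star g).integrable

theorem integral_clm_smul_lineDerivOp (ℓ : D →L[ℝ] ℝ) (f : 𝓢(D, F)) (m : D) :
    ∫ x, ℓ x • ∂_{m} f x ∂μ = -(ℓ m • ∫ x, f x ∂μ) := by
  have := integral_bilinear_hasLineDerivAt_right_eq_neg_left_of_integrable (B := .lsmul ℝ ℝ)
    (f' := fun _ ↦ ℓ m) (g := f) (μ := μ) (f.integrable.smul (ℓ m))
    (integrable_clm_smul ℓ (∂_{m} f)) (integrable_clm_smul ℓ f)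
    (fun x _ ↦ ℓ.hasFDerivAt.hasLineDerivAt m) (fun x _ ↦ (f.hasFDerivAt x).hasLineDerivAt m)
  simpa [integral_smul] using this

theorem integral_lineDerivOp_lineDerivOp_mul_conj (v : 𝓢(D, ℂ)) (m : D) :
    ∫ x, ∂_{m} (∂_{m} v) x * conj (v x) ∂μ = -((∫ x, ‖∂_{m} v x‖ ^ 2 ∂μ : ℝ) : ℂ) := by
  have h := integral_mul_lineDerivOp_right_eq_neg_left (μ := μ) (star v) (∂_{m} v) m
  simp only [lineDerivOp_star, star_apply] at h
  rw [← integral_mul_conj_self]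
  simpa only [mul_comm] using h

theorem re_integral_clm_smul_mul_conj_lineDerivOp (ℓ : D →L[ℝ] ℝ) (g : 𝓢(D, ℂ)) (m : D) :
    (∫ x, ℓ x • (g x * conj (∂_{m} g x)) ∂μ).re = -(ℓ m / 2 * ∫ x, ‖g x‖ ^ 2 ∂μ) := by
  set N : 𝓢(D, ℝ) := postcompCLM Complex.reCLM (g * star g)
  have hN (x : D) : N x = ‖g x‖ ^ 2 := by
    simp [N, postcompCLM_apply, Complex.mul_conj', ← Complex.ofReal_pow]
  have hdN (x : D) : ∂_{m} N x = 2 * (g x * conj (∂_{m} g x)).re := by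
    simp only [N, lineDerivOp_postcompCLM, lineDerivOp_mul, lineDerivOp_star, postcompCLM_apply,
      add_apply, mul_apply, star_apply, Complex.reCLM_apply, Complex.add_re, Complex.mul_re,
      Complex.conj_re, Complex.conj_im]
    ring
  have hint : Integrable (fun x ↦ ℓ x • (g x * conj (∂_{m} g x))) μ :=
    integrable_clm_smul ℓ (g * star (∂_{m} g))
  calc (∫ x, ℓ x • (g x * conj (∂_{m} g x)) ∂μ).re
      = ∫ x, ℓ x * (g x * conj (∂_{m} g x)).re ∂μ := by
        rw [← Complex.reCLM_apply, ← ContinuousLinearMap.integral_comp_comm _ hint]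
        simp
    _ = 1 / 2 * ∫ x, ℓ x • ∂_{m} N x ∂μ := by
        rw [← integral_const_mul]
        congr 1 with x
        rw [hdN, smul_eq_mul]
        ring
    _ = -(ℓ m / 2 * ∫ x, ‖g x‖ ^ 2 ∂μ) := by
        rw [integral_clm_smul_lineDerivOp, smul_eq_mul]
        simp only [hN]
        ring

theorem re_integral_clm_smul_lineDerivOp_lineDerivOp_mul_conj (ℓ : D →L[ℝ] ℝ) (v : 𝓢(D, ℂ))
    (u w : D) :
    (∫ x, ℓ x • (∂_{u} (∂_{u} v) x * conj (∂_{w} v x)) ∂μ).re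
      = ℓ w / 2 * ∫ x, ‖∂_{u} v x‖ ^ 2 ∂μ
        - ℓ u * (∫ x, ∂_{u} v x * conj (∂_{w} v x) ∂μ).re := by
  set f := smulLeftCLM ℂ ℓ (star (∂_{w} v))
  have hf (x : D) : f x = ℓ x • conj (∂_{w} v x) :=
    smulLeftCLM_apply_apply ℓ.hasTemperateGrowth _ x
  have hsplit : ∫ x, ∂_{u} f x * ∂_{u} v x ∂μ
      = ℓ u • ∫ x, ∂_{u} v x * conj (∂_{w} v x) ∂μ
        + ∫ x, ℓ x • (∂_{u} v x * conj (∂_{w} (∂_{u} v) x)) ∂μ := by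
    have hint₁ : Integrable (fun x ↦ ℓ u • (∂_{u} v x * conj (∂_{w} v x))) μ :=
      (integrable_mul_conj _ _).smul (ℓ u)
    have hint₂ : Integrable (fun x ↦ ℓ x • (∂_{u} v x * conj (∂_{w} (∂_{u} v) x))) μ :=
      integrable_clm_smul ℓ (∂_{u} v * star (∂_{w} (∂_{u} v)))
    rw [← integral_smul, ← integral_add hint₁ hint₂]
    congr 1 with x
    simp only [f, lineDerivOp_smulLeftCLM, lineDerivOp_star, lineDerivOp_comm v u w, add_apply,
      smul_apply, star_apply, Complex.real_smul, smulLeftCLM_apply_apply ℓ.hasTemperateGrowth]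
    ring
  calc (∫ x, ℓ x • (∂_{u} (∂_{u} v) x * conj (∂_{w} v x)) ∂μ).re
      = (∫ x, f x * ∂_{u} (∂_{u} v) x ∂μ).re := by
        simp only [hf, smul_mul_assoc, mul_comm (∂_{u} (∂_{u} v) _)]
    _ = -(ℓ u * (∫ x, ∂_{u} v x * conj (∂_{w} v x) ∂μ).re
          + (∫ x, ℓ x • (∂_{u} v x * conj (∂_{w} (∂_{u} v) x)) ∂μ).re) := by
        rw [integral_mul_lineDerivOp_right_eq_neg_left, hsplit]
        simp
    _ = _ := by
        rw [re_integral_clm_smul_mul_conj_lineDerivOp]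
        ring

theorem re_integral_clm_smul_mul_sq_norm_mul_conj_lineDerivOp (ℓ : D →L[ℝ] ℝ) (v : 𝓢(D, ℂ))
    (m : D) :
    (∫ x, ℓ x • (v x * (‖v x‖ : ℂ) ^ 2 * conj (∂_{m} v x)) ∂μ).re
      = -(ℓ m / 4 * ∫ x, ‖v x‖ ^ 4 ∂μ) := by
  have h := re_integral_clm_smul_mul_conj_lineDerivOp (μ := μ) ℓ (v * v) m
  have hpt (x : D) : ℓ x • ((v * v) x * conj (∂_{m} (v * v) x))
      = 2 * ℓ x • (v x * (‖v x‖ : ℂ) ^ 2 * conj (∂_{m} v x)) := by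
    simp only [lineDerivOp_mul, add_apply, mul_apply, ← Complex.mul_conj', map_add, map_mul,
      Complex.real_smul]
    ring
  have hnorm (x : D) : ‖(v * v) x‖ ^ 2 = ‖v x‖ ^ 4 := by
    rw [mul_apply, norm_mul]
    ring
  simp only [hpt, hnorm, integral_const_mul, Complex.mul_re, Complex.re_ofNat,
    Complex.im_ofNat, zero_mul, sub_zero] at h
  linarith

section Euclidean

variable {ι : Type*} [Fintype ι] [DecidableEq ι]

local notation "∂[" i "]" => ∂_{EuclideanSpace.single i (1 : ℝ)}

/-- The operator `Λv = v + y·∇v`. -/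
def scalingGenerator (v : 𝓢(EuclideanSpace ℝ ι, ℂ)) : 𝓢(EuclideanSpace ℝ ι, ℂ) :=
  v + ∑ i, smulLeftCLM ℂ (EuclideanSpace.proj i : EuclideanSpace ℝ ι →L[ℝ] ℝ) (∂[i] v)

theorem scalingGenerator_apply (v : 𝓢(EuclideanSpace ℝ ι, ℂ)) (x : EuclideanSpace ℝ ι) :
    scalingGenerator v x = v x + ∑ i, x i • ∂[i] v x := by
  rw [scalingGenerator, add_apply, sum_apply]
  congr 1
  exact Finset.sum_congr rfl fun i _ ↦
    smulLeftCLM_apply_apply (EuclideanSpace.proj (𝕜 := ℝ) i).hasTemperateGrowth _ x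

variable {μ : Measure (EuclideanSpace ℝ ι)} [μ.IsAddHaarMeasure]

theorem re_integral_lineDerivOp_lineDerivOp_mul_conj_scalingGenerator
    (v : 𝓢(EuclideanSpace ℝ ι, ℂ)) (j : ι) :
    (∫ x, ∂[j] (∂[j] v) x * conj (scalingGenerator v x) ∂μ).re
      = (Fintype.card ι / 2 - 2) * ∫ x, ‖∂[j] v x‖ ^ 2 ∂μ := by
  set w := ∂[j] (∂[j] v)
  have hpt (x : EuclideanSpace ℝ ι) : w x * conj (scalingGenerator v x)
      = w x * conj (v x) + ∑ i, EuclideanSpace.proj i x • (w x * conj (∂[i] v x)) := by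
    simp [scalingGenerator_apply, mul_add, Finset.mul_sum, mul_left_comm]
  have hint (i : ι) :
      Integrable (fun x ↦ EuclideanSpace.proj i x • (w x * conj (∂[i] v x))) μ :=
    integrable_clm_smul _ (w * star (∂[i] v))
  simp only [hpt]
  rw [integral_add (integrable_mul_conj w v) (integrable_finsetSum _ fun i _ ↦ hint i),
    integral_finsetSum _ fun i _ ↦ hint i]
  simp only [w, Complex.add_re, Complex.re_sum, integral_lineDerivOp_lineDerivOp_mul_conj,
    re_integral_clm_smul_lineDerivOp_lineDerivOp_mul_conj]
  simp only [integral_mul_conj_self, Complex.neg_re, Complex.ofReal_re, PiLp.proj_apply,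
    PiLp.single_eq_same, PiLp.single_apply, ite_mul, one_mul, zero_mul, Finset.sum_sub_distrib,
    Finset.sum_const, Finset.card_univ, nsmul_eq_mul, Finset.sum_ite_eq', Finset.mem_univ, if_true]
  ring

theorem re_integral_mul_sq_norm_mul_conj_scalingGenerator (v : 𝓢(EuclideanSpace ℝ ι, ℂ)) :
    (∫ x, v x * (‖v x‖ : ℂ) ^ 2 * conj (scalingGenerator v x) ∂μ).re
      = (1 - Fintype.card ι / 4) * ∫ x, ‖v x‖ ^ 4 ∂μ := by
  have hpt (x : EuclideanSpace ℝ ι) : v x * (‖v x‖ : ℂ) ^ 2 * conj (scalingGenerator v x)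
      = ((‖v x‖ ^ 4 : ℝ) : ℂ)
        + ∑ i, EuclideanSpace.proj i x • (v x * (‖v x‖ : ℂ) ^ 2 * conj (∂[i] v x)) := by
    rw [scalingGenerator_apply, map_add, mul_add]
    congr 1
    · rw [mul_right_comm, Complex.mul_conj']
      push_cast
      ring
    · simp [Finset.mul_sum, mul_left_comm]
  have hint₀ : Integrable (fun x ↦ ((‖v x‖ ^ 4 : ℝ) : ℂ)) μ :=
    ((v.memLp 4 μ).integrable_norm_pow (by norm_num)).ofReal
  have hint (i : ι) : Integrable
      (fun x ↦ EuclideanSpace.proj i x • (v x * (‖v x‖ : ℂ) ^ 2 * conj (∂[i] v x))) μ := by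
    refine (integrable_clm_smul (μ := μ) (EuclideanSpace.proj i)
      (v * (v * star v) * star (∂[i] v))).congr (.of_forall fun x ↦ ?_)
    dsimp only
    rw [mul_apply, mul_mul_star_self_apply, star_apply]
  simp only [hpt]
  rw [integral_add hint₀ (integrable_finsetSum _ fun i _ ↦ hint i),
    integral_finsetSum _ fun i _ ↦ hint i]
  simp only [Complex.add_re, Complex.re_sum, re_integral_clm_smul_mul_sq_norm_mul_conj_lineDerivOp]
  simp only [integral_complex_ofReal, Complex.ofReal_re, PiLp.proj_apply, PiLp.single_eq_same,
    Finset.sum_neg_distrib, Finset.sum_const, Finset.card_univ, nsmul_eq_mul]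
  ring

theorem re_integral_laplacian_mul_conj_scalingGenerator (v : 𝓢(EuclideanSpace ℝ ι, ℂ)) :
    (∫ x, Δ v x * conj (scalingGenerator v x) ∂μ).re
      = (Fintype.card ι / 2 - 2) * ∫ x, ∑ j : ι, ‖∂[j] v x‖ ^ 2 ∂μ := by
  rw [laplacian_eq_sum (EuclideanSpace.basisFun ι ℝ)]
  simp only [EuclideanSpace.basisFun_apply, sum_apply, Finset.sum_mul]
  rw [integral_finsetSum _ fun j _ ↦ integrable_mul_conj _ (scalingGenerator v),
    integral_finsetSum _ fun j _ ↦ ((∂[j] v).memLp 2 μ).integrable_norm_pow two_ne_zero,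
    Complex.re_sum, Finset.mul_sum]
  exact Finset.sum_congr rfl fun j _ ↦
    re_integral_lineDerivOp_lineDerivOp_mul_conj_scalingGenerator v j

end Euclidean

end SchwartzMap

/-- Pohozaev-type identity: for a Schwartz function `v : ℝ² → ℂ`,
`Re ∫ (Δv + v|v|²) conj(v + y·∇v) = -∫ |∇v|² + (1/2) ∫ |v|⁴`. -/
theorem pohozaev_identity (v : SchwartzMap E2 ℂ) :
    (∫ y : E2,
        (lapC (⇑v) y + v y * (‖v y‖ : ℂ) ^ 2) *
          (starRingEnd ℂ) (v y + ∑ i, (y i : ℂ) * pdC i (⇑v) y)).re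
      = -(∫ y : E2, ∑ i, ‖pdC i (⇑v) y‖ ^ 2) + (1 / 2) * ∫ y : E2, ‖v y‖ ^ 4 := by
  have hpdC (i : Fin 2) (f : SchwartzMap E2 ℂ) :
      pdC i ⇑f = ⇑(∂_{EuclideanSpace.single i (1 : ℝ)} f : SchwartzMap E2 ℂ) := rfl
  have hlapC : lapC ⇑v = ⇑(Δ v : SchwartzMap E2 ℂ) := by
    ext y
    simp [lapC, hpdC, SchwartzMap.laplacian_eq_sum (EuclideanSpace.basisFun (Fin 2) ℝ)]
  have hΛ (y : E2) : v y + ∑ i, (y i : ℂ) * pdC i (⇑v) y = v.scalingGenerator y := by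
    simp [SchwartzMap.scalingGenerator_apply, hpdC, Complex.real_smul]
  have hcubic :
      Integrable (fun y ↦ v y * (‖v y‖ : ℂ) ^ 2 * conj (v.scalingGenerator y)) :=
    ((v * (v * star v)).integrable_mul_conj v.scalingGenerator).congr
      (.of_forall fun y ↦ by simp only [SchwartzMap.mul_mul_star_self_apply])
  simp only [hlapC, hΛ]
  simp only [add_mul, hpdC]
  rw [integral_add ((Δ v).integrable_mul_conj _) hcubic, Complex.add_re,
    SchwartzMap.re_integral_laplacian_mul_conj_scalingGenerator,
    SchwartzMap.re_integral_mul_sq_norm_mul_conj_scalingGenerator]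
  norm_num
end
end

section
/- Let 0 ≤ μ < 2 and σ₁ ∈ ℝ. There is a constant C = C(μ, σ₁) such that the following holds. Let s₀ ≥ e, T > 0, and let λ, b : [0,T] → (0,∞) be continuous functions such that, setting s(τ) := s₀ + ∫₀^τ λ(σ)^{−2} dσ, one has for all τ ∈ [0,T]: λ(τ) < exp(−exp(π/(10 b(τ)))) and b(τ) ≤ 10π / log(s(τ)). Then ∫₀^T e^{σ₁/b(τ)} λ(τ)^{−μ} dτ ≤ C · exp( −((2−μ)/4) · s₀^{1/100} ). -/
open MeasureTheory Real Set

/-!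
Write `x = π / (10 b)` and `E = exp x`. The hypotheses say `λ < exp (-E)` and, through
`b log s ≤ 10π`, `s ^ (1/100) ≤ E`; so `λ^{-μ} = λ^{2-μ} λ^{-2} ≤ exp (-(2-μ) E) λ^{-2}`.
Half of this decay absorbs `exp (σ₁ / b) ≤ exp (K x)` because `E ≥ x² / 4`, a quarter yields
`exp (-((2-μ)/4) s₀ ^ (1/100))`, and the last quarter is at most a constant times `s⁻²`, since
`s² = (s ^ (1/100)) ^ 200`. As `s' = λ⁻²`, what is left is `∫ s' / s² ≤ 1 / s₀ ≤ 1`.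
-/

theorem mul_sub_mul_exp_le (K : ℝ) {c x : ℝ} (hc : 0 < c) (hx : 0 ≤ x) :
    K * x - c * exp x ≤ K ^ 2 / c := by
  have hexp : x ^ 2 / 4 ≤ exp x := by nlinarith [quadratic_le_exp_of_nonneg hx]
  have hsq : 0 ≤ c * (x / 2 - K / c) ^ 2 := by positivity
  have hsq_expand : c * (x / 2 - K / c) ^ 2 = c * (x ^ 2 / 4) - K * x + K ^ 2 / c := by
    field_simp; ring
  nlinarith [mul_le_mul_of_nonneg_left hexp hc.le]

theorem exp_neg_mul_le_factorial_div {δ y : ℝ} (hδ : 0 < δ) (hy : 0 < y) (n : ℕ) :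
    exp (-(δ * y)) ≤ n.factorial / δ ^ n / y ^ n := by
  have h := pow_div_factorial_le_exp (δ * y) (mul_pos hδ hy).le n
  rw [exp_neg, div_div, ← mul_pow, le_div_iff₀ (by positivity), inv_mul_le_iff₀ (exp_pos _)]
  rwa [div_le_iff₀ (by positivity)] at h

theorem rpow_le_exp_of_mul_log_le {s b c p : ℝ} (hs : 0 < s) (hb : 0 < b) (hp : 0 ≤ p)
    (h : b * log s ≤ c) : s ^ p ≤ exp (p * c / b) := by
  rw [rpow_def_of_pos hs, exp_le_exp, le_div_iff₀ hb]
  nlinarith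

section Primitive

variable {w : ℝ → ℝ} {a T : ℝ}

theorem continuousOn_primitive_Icc_left (haT : a ≤ T) (hw : ContinuousOn w (Icc a T)) :
    ContinuousOn (fun τ => ∫ σ in a..τ, w σ) (Icc a T) := by
  rw [← uIcc_of_le haT] at hw ⊢
  exact intervalIntegral.continuousOn_primitive_interval' hw.intervalIntegrable
    left_mem_uIcc

theorem primitive_nonneg (hw0 : ∀ σ ∈ Icc a T, 0 ≤ w σ) {τ : ℝ} (hτ : τ ∈ Icc a T) :
    0 ≤ ∫ σ in a..τ, w σ :=
  intervalIntegral.integral_nonneg hτ.1 fun σ hσ => hw0 σ ⟨hσ.1, hσ.2.trans hτ.2⟩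

theorem hasDerivAt_primitive_of_mem_Ioo (hw : ContinuousOn w (Icc a T)) {τ : ℝ}
    (hτ : τ ∈ Ioo a T) : HasDerivAt (fun t => ∫ σ in a..t, w σ) (w τ) τ :=
  intervalIntegral.integral_hasDerivAt_right
    ((hw.mono (Icc_subset_Icc_right hτ.2.le)).intervalIntegrable_of_Icc hτ.1.le)
    ((hw.mono Ioo_subset_Icc_self).stronglyMeasurableAtFilter isOpen_Ioo τ hτ)
    (hw.continuousAt (Icc_mem_nhds hτ.1 hτ.2))

variable {s₀ : ℝ}

theorem continuousOn_div_sq_add_primitive (haT : a ≤ T) (hw : ContinuousOn w (Icc a T))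
    (hw0 : ∀ σ ∈ Icc a T, 0 ≤ w σ) (hs₀ : 0 < s₀) :
    ContinuousOn (fun τ => w τ / (s₀ + ∫ σ in a..τ, w σ) ^ 2) (Icc a T) :=
  hw.div ((continuousOn_const.add (continuousOn_primitive_Icc_left haT hw)).pow 2)
    fun τ hτ => by have := primitive_nonneg hw0 hτ; positivity

theorem integral_div_sq_add_primitive_le (haT : a ≤ T) (hw : ContinuousOn w (Icc a T))
    (hw0 : ∀ σ ∈ Icc a T, 0 ≤ w σ) (hs₀ : 0 < s₀) :
    ∫ τ in a..T, w τ / (s₀ + ∫ σ in a..τ, w σ) ^ 2 ≤ s₀⁻¹ := by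
  set s := fun τ => s₀ + ∫ σ in a..τ, w σ
  have hs : ∀ τ ∈ Icc a T, 0 < s τ := fun τ hτ => by
    have := primitive_nonneg hw0 hτ; simp only [s]; positivity
  have hFTC : ∫ τ in a..T, w τ / s τ ^ 2 = -(s T)⁻¹ - -(s a)⁻¹ := by
    refine intervalIntegral.integral_eq_sub_of_hasDeriv_right_of_le haT
      ((continuousOn_const.add (continuousOn_primitive_Icc_left haT hw)).inv₀
        fun τ hτ => (hs τ hτ).ne').neg (fun τ hτ => ?_)
      ((continuousOn_div_sq_add_primitive haT hw hw0 hs₀).intervalIntegrable_of_Icc haT)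
    have h := (((hasDerivAt_primitive_of_mem_Ioo hw hτ).const_add s₀).inv
      (hs τ (Ioo_subset_Icc_self hτ)).ne').neg
    rw [neg_div, neg_neg] at h
    exact h.hasDerivWithinAt
  have hsT := hs T ⟨haT, le_rfl⟩
  rw [hFTC]
  simp only [s, intervalIntegral.integral_same, add_zero]
  linarith [inv_pos.mpr hsT]

end Primitive

noncomputable def loglogConst (μ σ₁ : ℝ) : ℝ :=
  exp ((10 * |σ₁| / π) ^ 2 / (2 * ((2 - μ) / 4))) * ((200).factorial / ((2 - μ) / 4) ^ 200)

theorem loglogConst_pos {μ : ℝ} (hμ : μ < 2) (σ₁ : ℝ) : 0 < loglogConst μ σ₁ := by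
  have : 0 < (2 - μ) / 4 := by linarith
  unfold loglogConst
  positivity

theorem exp_div_mul_rpow_neg_le {μ σ₁ b lam s₀ s : ℝ} (hμ : μ < 2) (hb : 0 < b)
    (hlam : 0 < lam) (hs₀ : 1 < s₀) (hs₀s : s₀ ≤ s)
    (hlam_lt : lam < exp (-exp (π / (10 * b)))) (hb_le : b ≤ 10 * π / log s) :
    exp (σ₁ / b) * lam ^ (-μ) ≤
      loglogConst μ σ₁ * exp (-((2 - μ) / 4) * s₀ ^ ((1 : ℝ) / 100)) *
        (lam ^ (-(2 : ℝ)) / s ^ 2) := by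
  obtain ⟨δ, hδ_def⟩ : ∃ δ, δ = (2 - μ) / 4 := ⟨_, rfl⟩
  obtain ⟨x, hx_def⟩ : ∃ x, x = π / (10 * b) := ⟨_, rfl⟩
  obtain ⟨K, hK_def⟩ : ∃ K, K = 10 * |σ₁| / π := ⟨_, rfl⟩
  rw [← hδ_def, neg_mul]
  rw [← hx_def] at hlam_lt
  have hδ : 0 < δ := by linarith
  have hs : 0 < s := by linarith
  have hlog : 0 < log s := log_pos (by linarith)
  have hσ₁ : σ₁ / b ≤ K * x := by
    have : K * x = |σ₁| / b := by rw [hK_def, hx_def]; field_simp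
    rw [this]
    exact div_le_div_of_nonneg_right (le_abs_self σ₁) hb.le
  have hlam_rpow : lam ^ (2 - μ) ≤ exp (-(4 * δ) * exp x) := by
    calc lam ^ (2 - μ) ≤ exp (-exp x) ^ (2 - μ) := rpow_le_rpow hlam.le hlam_lt.le (by linarith)
      _ = exp (-(4 * δ) * exp x) := by rw [← exp_mul, hδ_def]; ring_nf
  have hs_exp : s ^ ((1 : ℝ) / 100) ≤ exp x := by
    have h := rpow_le_exp_of_mul_log_le hs hb (c := 10 * π) (p := 1 / 100) (by norm_num)
      (by rwa [le_div_iff₀ hlog] at hb_le)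
    convert h using 2
    rw [hx_def]
    field_simp
    norm_num
  have hx : 0 ≤ x := by rw [hx_def]; positivity
  have hyoung := mul_sub_mul_exp_le K (mul_pos two_pos hδ) hx
  have htail : exp (-(δ * s ^ ((1 : ℝ) / 100))) ≤ (200).factorial / δ ^ 200 / s ^ 2 := by
    have h := exp_neg_mul_le_factorial_div hδ (rpow_pos_of_pos hs ((1 : ℝ) / 100)) 200
    have h200 : (1 : ℝ) / 100 * (200 : ℕ) = (2 : ℕ) := by norm_num
    rwa [← rpow_natCast (s ^ _), ← rpow_mul hs.le, h200, rpow_natCast] at h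
  have hs₀_rpow : s₀ ^ ((1 : ℝ) / 100) ≤ s ^ ((1 : ℝ) / 100) :=
    rpow_le_rpow (by linarith) hs₀s (by norm_num)
  calc exp (σ₁ / b) * lam ^ (-μ) = exp (σ₁ / b) * lam ^ (2 - μ) * lam ^ (-(2 : ℝ)) := by
        rw [mul_assoc, ← rpow_add hlam]; ring_nf
    _ ≤ exp (K * x) * exp (-(4 * δ) * exp x) * lam ^ (-(2 : ℝ)) := by gcongr
    _ = exp (K * x - 2 * δ * exp x) * exp (-(δ * exp x)) * exp (-(δ * exp x)) *
          lam ^ (-(2 : ℝ)) := by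
        rw [← exp_add, ← exp_add, ← exp_add]; ring_nf
    _ ≤ exp (K ^ 2 / (2 * δ)) * exp (-(δ * s₀ ^ ((1 : ℝ) / 100))) *
          exp (-(δ * s ^ ((1 : ℝ) / 100))) * lam ^ (-(2 : ℝ)) := by
        gcongr
        exact hs₀_rpow.trans hs_exp
    _ ≤ exp (K ^ 2 / (2 * δ)) * exp (-(δ * s₀ ^ ((1 : ℝ) / 100))) *
          ((200).factorial / δ ^ 200 / s ^ 2) * lam ^ (-(2 : ℝ)) := by gcongr
    _ = loglogConst μ σ₁ * exp (-(δ * s₀ ^ ((1 : ℝ) / 100))) *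
          (lam ^ (-(2 : ℝ)) / s ^ 2) := by
        rw [loglogConst, ← hδ_def, ← hK_def]
        ring

theorem integrability_from_loglog_general (μ σ₁ : ℝ) (hμ2 : μ < 2) :
    ∃ C : ℝ, 0 < C ∧ ∀ (s₀ T : ℝ) (lam b : ℝ → ℝ),
      Real.exp 1 ≤ s₀ → 0 < T →
      ContinuousOn lam (Set.Icc 0 T) → ContinuousOn b (Set.Icc 0 T) →
      (∀ τ ∈ Set.Icc (0 : ℝ) T, 0 < lam τ ∧ 0 < b τ) →
      (∀ τ ∈ Set.Icc (0 : ℝ) T,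
        lam τ < Real.exp (-Real.exp (Real.pi / (10 * b τ))) ∧
        b τ ≤ 10 * Real.pi /
          Real.log (s₀ + ∫ σ in (0:ℝ)..τ, (lam σ) ^ (-(2:ℝ)))) →
      (∫ τ in (0:ℝ)..T, Real.exp (σ₁ / b τ) * (lam τ) ^ (-μ))
        ≤ C * Real.exp (-((2 - μ) / 4) * s₀ ^ ((1:ℝ) / 100)) := by
  refine ⟨loglogConst μ σ₁, loglogConst_pos hμ2 σ₁, ?_⟩
  intro s₀ T lam b hs₀ hT hlam hb hpos hloglog
  have hs₀_one : 1 < s₀ := (one_lt_exp_iff.mpr one_pos).trans_le hs₀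
  have hw : ContinuousOn (fun σ => lam σ ^ (-(2 : ℝ))) (Icc 0 T) :=
    hlam.rpow_const fun τ hτ => Or.inl (hpos τ hτ).1.ne'
  have hw0 : ∀ τ ∈ Icc 0 T, 0 ≤ lam τ ^ (-(2 : ℝ)) :=
    fun τ hτ => (rpow_pos_of_pos (hpos τ hτ).1 _).le
  have hlhs : ContinuousOn (fun τ => exp (σ₁ / b τ) * lam τ ^ (-μ)) (Icc 0 T) :=
    (continuousOn_const.div hb fun τ hτ => (hpos τ hτ).2.ne').rexp.mul
      (hlam.rpow_const fun τ hτ => Or.inl (hpos τ hτ).1.ne')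
  set D := loglogConst μ σ₁ * exp (-((2 - μ) / 4) * s₀ ^ ((1 : ℝ) / 100))
  have hD : 0 < D := mul_pos (loglogConst_pos hμ2 σ₁) (exp_pos _)
  calc ∫ τ in (0 : ℝ)..T, exp (σ₁ / b τ) * lam τ ^ (-μ)
      ≤ ∫ τ in (0 : ℝ)..T, D * (lam τ ^ (-(2 : ℝ)) /
          (s₀ + ∫ σ in (0 : ℝ)..τ, lam σ ^ (-(2 : ℝ))) ^ 2) :=
        intervalIntegral.integral_mono_on hT.le (hlhs.intervalIntegrable_of_Icc hT.le)
          (((continuousOn_div_sq_add_primitive hT.le hw hw0 (by linarith)).intervalIntegrable_of_Icc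
            hT.le).const_mul D)
          fun τ hτ => exp_div_mul_rpow_neg_le hμ2 (hpos τ hτ).2 (hpos τ hτ).1 hs₀_one
            (le_add_of_nonneg_right (primitive_nonneg hw0 hτ))
            (hloglog τ hτ).1 (hloglog τ hτ).2
    _ = D * ∫ τ in (0 : ℝ)..T, lam τ ^ (-(2 : ℝ)) /
          (s₀ + ∫ σ in (0 : ℝ)..τ, lam σ ^ (-(2 : ℝ))) ^ 2 :=
        intervalIntegral.integral_const_mul _ _
    _ ≤ D * s₀⁻¹ := by
        gcongr
        exact integral_div_sq_add_primitive_le hT.le hw hw0 (by linarith)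
    _ ≤ D := mul_le_of_le_one_right hD.le (inv_le_one_of_one_le₀ hs₀_one.le)

/-- Integrability of `λ^{-μ}`, `0 ≤ μ < 2`, enforced by the log-log relations
between `b` and `λ`. -/
theorem integrability_from_loglog (μ σ₁ : ℝ) (hμ0 : 0 ≤ μ) (hμ2 : μ < 2) :
    ∃ C : ℝ, 0 < C ∧ ∀ (s₀ T : ℝ) (lam b : ℝ → ℝ),
      Real.exp 1 ≤ s₀ → 0 < T →
      ContinuousOn lam (Set.Icc 0 T) → ContinuousOn b (Set.Icc 0 T) →
      (∀ τ ∈ Set.Icc (0 : ℝ) T, 0 < lam τ ∧ 0 < b τ) →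
      (∀ τ ∈ Set.Icc (0 : ℝ) T,
        lam τ < Real.exp (-Real.exp (Real.pi / (10 * b τ))) ∧
        b τ ≤ 10 * Real.pi /
          Real.log (s₀ + ∫ σ in (0:ℝ)..τ, (lam σ) ^ (-(2:ℝ)))) →
      (∫ τ in (0:ℝ)..T, Real.exp (σ₁ / b τ) * (lam τ) ^ (-μ))
        ≤ C * Real.exp (-((2 - μ) / 4) * s₀ ^ ((1:ℝ) / 100)) :=
  integrability_from_loglog_general μ σ₁ hμ2
end

section
/- Let μ > 2, T > 0, and let λ, b : [0,T) → (0,∞) be differentiable functions satisfying, for all t ∈ [0,T): |λ(t) λ'(t) + b(t)| ≤ b(t)/2 and λ(t)² |b'(t)| ≤ ((μ−2)/4) · b(t)². Then for every t ∈ [0,T): ∫₀^t λ(τ)^{−μ} dτ ≤ (4/(μ−2)) · 1/( b(t) · λ(t)^{μ−2} ). -/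
open MeasureTheory Set

/-!
The right-hand side is `G = c / (b λ^(μ-2))` with `c = 4/(μ-2)`. Differentiating,
`G' = c λ^(-μ) (-b' λ²/b² - (μ-2) λλ'/b)`, and the two hypotheses bound the bracket below by
`-(μ-2)/4 + (μ-2)/2 = 1/c`, so `G' ≥ λ^(-μ)`. Integrating and dropping `G 0 ≥ 0` gives the claim.
-/

lemma integral_le_sub_of_hasDerivWithinAt_Ico {f G G' : ℝ → ℝ} {a T t : ℝ} (ht : t ∈ Ico a T)
    (hG : ∀ x ∈ Ico a T, HasDerivWithinAt G (G' x) (Ico a T) x)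
    (hf : ContinuousOn f (Ico a T)) (hle : ∀ x ∈ Ico a T, f x ≤ G' x) :
    ∫ x in a..t, f x ≤ G t - G a := by
  have hsub : Icc a t ⊆ Ico a T := Icc_subset_Ico_right ht.2
  refine intervalIntegral.integral_le_sub_of_hasDeriv_right_of_le ht.1
    (fun x hx => (hG x (hsub hx)).continuousWithinAt.mono hsub) (fun x hx => ?_)
    ((hf.mono hsub).integrableOn_Icc) (fun x hx => hle x (hsub (Ioo_subset_Icc_self hx)))
  refine (hG x (hsub (Ioo_subset_Icc_self hx))).mono_of_mem_nhdsWithin ?_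
  exact Filter.mem_of_superset (Ioo_mem_nhdsGT (hx.2.trans ht.2))
    fun y hy => ⟨(hx.1.trans hy.1).le, hy.2⟩

lemma hasDerivWithinAt_one_div_mul_rpow {f g : ℝ → ℝ} {f' g' μ x : ℝ} {s : Set ℝ}
    (hf : HasDerivWithinAt f f' s x) (hg : HasDerivWithinAt g g' s x)
    (hfx : 0 < f x) (hgx : 0 < g x) :
    HasDerivWithinAt (fun y => 1 / (f y * g y ^ (μ - 2)))
      (g x ^ (-μ) * (-(f' * g x ^ 2 / f x ^ 2) - (μ - 2) * (g x * g') / f x)) s x := by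
  have hpow : 0 < g x ^ (μ - 2) := Real.rpow_pos_of_pos hgx _
  have := ((hf.mul (hg.rpow_const (p := μ - 2) (Or.inl hgx.ne'))).inv
    (mul_pos hfx hpow).ne')
  simp only [one_div]
  refine this.congr_deriv ?_
  have e1 : g x ^ (-μ) = (g x ^ (μ - 2))⁻¹ / g x ^ 2 := by
    rw [show -μ = -(μ - 2) + -2 by ring, Real.rpow_add hgx, Real.rpow_neg hgx.le,
      Real.rpow_neg hgx.le, div_eq_mul_inv, Real.rpow_two]
  rw [e1, Real.rpow_sub_one hgx.ne']
  simp only [Pi.mul_apply]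
  field_simp
  ring

lemma rpow_neg_le_of_modulation {μ L B l' b' : ℝ} (hμ : 2 < μ) (hL : 0 < L) (hB : 0 < B)
    (hmod : |L * l' + B| ≤ B / 2) (hsmall : L ^ 2 * |b'| ≤ (μ - 2) / 4 * B ^ 2) :
    L ^ (-μ) ≤ 4 / (μ - 2) * (L ^ (-μ) * (-(b' * L ^ 2 / B ^ 2) - (μ - 2) * (L * l') / B)) := by
  have hdyn : L * l' ≤ -B / 2 := by linarith [(abs_le.1 hmod).2]
  have hb' : b' * L ^ 2 ≤ (μ - 2) / 4 * B ^ 2 := by nlinarith [le_abs_self b']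
  have hquarter : (μ - 2) / 4 ≤ -(b' * L ^ 2 / B ^ 2) - (μ - 2) * (L * l') / B := by
    have h1 : b' * L ^ 2 / B ^ 2 ≤ (μ - 2) / 4 := by
      rw [div_le_iff₀ (by positivity)]; exact hb'
    have h2 : (μ - 2) / 2 ≤ -((μ - 2) * (L * l') / B) := by
      rw [← neg_div, le_div_iff₀ hB]; nlinarith
    linarith
  have hP : 0 < L ^ (-μ) := Real.rpow_pos_of_pos hL _
  calc L ^ (-μ) = 4 / (μ - 2) * (L ^ (-μ) * ((μ - 2) / 4)) := by
        field_simp [(sub_pos.2 hμ).ne']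
    _ ≤ _ := by gcongr

theorem refined_integrability_general (μ T : ℝ) (hμ : 2 < μ)
    (lam b lam' b' : ℝ → ℝ)
    (h : ∀ t ∈ Set.Ico (0 : ℝ) T,
      0 < lam t ∧ 0 < b t ∧
      HasDerivWithinAt lam (lam' t) (Set.Ico 0 T) t ∧
      HasDerivWithinAt b (b' t) (Set.Ico 0 T) t ∧
      |lam t * lam' t + b t| ≤ b t / 2 ∧
      (lam t) ^ 2 * |b' t| ≤ ((μ - 2) / 4) * (b t) ^ 2) :
    ∀ t ∈ Set.Ico (0 : ℝ) T,
      (∫ τ in (0:ℝ)..t, (lam τ) ^ (-μ))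
        ≤ (4 / (μ - 2)) * (1 / (b t * (lam t) ^ (μ - 2))) := by
  intro t ht
  have hderiv : ∀ x ∈ Ico 0 T,
      HasDerivWithinAt (fun y => 4 / (μ - 2) * (1 / (b y * lam y ^ (μ - 2))))
      (4 / (μ - 2) * (lam x ^ (-μ) *
        (-(b' x * lam x ^ 2 / b x ^ 2) - (μ - 2) * (lam x * lam' x) / b x))) (Ico 0 T) x :=
    fun x hx => have ⟨hlam, hb, hlam', hb', _⟩ := h x hx
      (hasDerivWithinAt_one_div_mul_rpow hb' hlam' hb hlam).const_mul _
  have hcont : ContinuousOn (fun τ => lam τ ^ (-μ)) (Ico 0 T) := fun x hx =>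
    (h x hx).2.2.1.continuousWithinAt.rpow_const (Or.inl (h x hx).1.ne')
  have hle : ∀ x ∈ Ico 0 T, lam x ^ (-μ) ≤ _ := fun x hx =>
    have ⟨hlam, hb, _, _, hmod, hsmall⟩ := h x hx
    rpow_neg_le_of_modulation hμ hlam hb hmod hsmall
  have hG0 : 0 ≤ 4 / (μ - 2) * (1 / (b 0 * lam 0 ^ (μ - 2))) := by
    have ⟨hlam, hb, _⟩ := h 0 ⟨le_rfl, ht.1.trans_lt ht.2⟩
    have := sub_pos.2 hμ
    positivity
  linarith [integral_le_sub_of_hasDerivWithinAt_Ico ht hderiv hcont hle]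

/-- Refined integrability of `λ^{-μ}`, `μ > 2`, from the approximate modulation
dynamics `λλ' ≈ -b` and the smallness of `b'`. -/
theorem refined_integrability (μ T : ℝ) (hμ : 2 < μ) (hT : 0 < T)
    (lam b lam' b' : ℝ → ℝ)
    (h : ∀ t ∈ Set.Ico (0 : ℝ) T,
      0 < lam t ∧ 0 < b t ∧
      HasDerivWithinAt lam (lam' t) (Set.Ico 0 T) t ∧
      HasDerivWithinAt b (b' t) (Set.Ico 0 T) t ∧
      |lam t * lam' t + b t| ≤ b t / 2 ∧
      (lam t) ^ 2 * |b' t| ≤ ((μ - 2) / 4) * (b t) ^ 2) :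
    ∀ t ∈ Set.Ico (0 : ℝ) T,
      (∫ τ in (0:ℝ)..t, (lam τ) ^ (-μ))
        ≤ (4 / (μ - 2)) * (1 / (b t * (lam t) ^ (μ - 2))) :=
  refined_integrability_general μ T hμ lam b lam' b' h
end

section
/- Let C₀ ≥ 1, T ∈ (0,∞), and let λ : [0,T) → (0,∞) be differentiable with λ(t) < e^{−e} for all t, with λ(t) → 0 as t → T⁻, and such that 1/C₀ ≤ −(d/dt)( λ(t)² · log log(1/λ(t)) ) ≤ C₀ for all t ∈ [0,T). Then there exist constants C₁ ≥ 1 and δ ∈ (0, e^{−e}), depending only on C₀, such that for every t ∈ [0,T) with T − t < δ: (1/C₁) · ( (T−t) / log log(1/(T−t)) )^{1/2} ≤ λ(t) ≤ C₁ · ( (T−t) / log log(1/(T−t)) )^{1/2}. -/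
open Real Set Filter

/-- Basic facts about `log(1/x)` and `log log (1/x)` for `0 < x < e^{-e}`. -/
private lemma loglog_basic {x : ℝ} (hx0 : 0 < x) (hx1 : x < Real.exp (-Real.exp 1)) :
    Real.exp 1 < Real.log (1 / x) ∧ 1 < Real.log (Real.log (1 / x)) := by
  have hlx : Real.log x < -Real.exp 1 := by
    rw [Real.log_lt_iff_lt_exp hx0]; exact hx1
  have h1 : Real.exp 1 < Real.log (1 / x) := by
    rw [one_div, Real.log_inv]; linarith
  refine ⟨h1, ?_⟩
  have := Real.log_lt_log (Real.exp_pos 1) h1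
  rwa [Real.log_exp] at this

/-- `0 ≤ x² log log (1/x) ≤ x` for `0 < x < e^{-e}`. -/
private lemma loglog_squeeze {x : ℝ} (hx0 : 0 < x) (hx1 : x < Real.exp (-Real.exp 1)) :
    0 ≤ x ^ 2 * Real.log (Real.log (1 / x)) ∧ x ^ 2 * Real.log (Real.log (1 / x)) ≤ x := by
  obtain ⟨h1, h2⟩ := loglog_basic hx0 hx1
  have hl1pos : 0 < Real.log (1 / x) := lt_trans (Real.exp_pos 1) h1
  have hle1 : Real.log (Real.log (1 / x)) ≤ Real.log (1 / x) := Real.log_le_self hl1pos.le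
  have hle2 : Real.log (1 / x) ≤ 1 / x := Real.log_le_self (by positivity)
  constructor
  · positivity
  · calc x ^ 2 * Real.log (Real.log (1 / x)) ≤ x ^ 2 * (1 / x) :=
        mul_le_mul_of_nonneg_left (le_trans hle1 hle2) (by positivity)
      _ = x := by field_simp [pow_two]

/-- The inversion step: from `u/C₀ ≤ x² log log(1/x) ≤ C₀ u` deduce
`x ≍ √(u / log log(1/u))`. -/
private lemma invert_step (C₀ x u : ℝ) (hC₀ : 1 ≤ C₀) (hx0 : 0 < x)
    (hx1 : x < Real.exp (-Real.exp 1)) (hu0 : 0 < u)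
    (hL1 : 16 ≤ Real.log (1 / u)) (hLC : 2 * Real.log C₀ ≤ Real.log (1 / u))
    (h1 : u / C₀ ≤ x ^ 2 * Real.log (Real.log (1 / x)))
    (h2 : x ^ 2 * Real.log (Real.log (1 / x)) ≤ C₀ * u) :
    (1 / Real.sqrt (2 * C₀)) * Real.sqrt (u / Real.log (Real.log (1 / u))) ≤ x ∧
      x ≤ Real.sqrt (2 * C₀) * Real.sqrt (u / Real.log (Real.log (1 / u))) := by
  have hC0 : (0 : ℝ) < C₀ := by linarith
  obtain ⟨hl1e, hl2one⟩ := loglog_basic hx0 hx1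
  set l1 := Real.log (1 / x) with hl1def
  set l2 := Real.log l1 with hl2def
  set L1 := Real.log (1 / u) with hL1def
  set L2 := Real.log L1 with hL2def
  clear_value l1 l2 L1 L2
  have hl1pos : 0 < l1 := lt_trans (Real.exp_pos 1) hl1e
  have hl2pos : 0 < l2 := by linarith
  have hL1pos : 0 < L1 := by linarith
  have hL2ge : Real.log 16 ≤ L2 := by
    rw [hL2def]; exact Real.log_le_log (by norm_num) hL1
  have hlog16 : Real.log 16 = 2 * Real.log 4 := by
    rw [show (16 : ℝ) = 4 ^ 2 by norm_num, Real.log_pow]; push_cast; ring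
  have hlog4pos : 0 < Real.log 4 := Real.log_pos (by norm_num)
  have hL2pos : 0 < L2 := lt_of_lt_of_le (by linarith) hL2ge
  have hlogC : 0 ≤ Real.log C₀ := Real.log_nonneg hC₀
  have hlogu : Real.log u = -L1 := by
    rw [hL1def, one_div, Real.log_inv, neg_neg]
  -- Upper bound chain
  have hx2u : x ^ 2 ≤ C₀ * u := by nlinarith [sq_nonneg x]
  have hxle : x ≤ Real.sqrt (C₀ * u) := by
    rw [show x = Real.sqrt (x ^ 2) from (Real.sqrt_sq hx0.le).symm]
    exact Real.sqrt_le_sqrt hx2u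
  have hl1ge : L1 / 4 ≤ l1 := by
    have h := Real.log_le_log hx0 hxle
    rw [Real.log_sqrt (by positivity), Real.log_mul (ne_of_gt hC0) (ne_of_gt hu0), hlogu] at h
    have h' : (L1 - Real.log C₀) / 2 ≤ -Real.log x := by linarith
    rw [hl1def, one_div, Real.log_inv]
    linarith
  have hl2ge : L2 / 2 ≤ l2 := by
    have h := Real.log_le_log (by positivity : (0:ℝ) < L1 / 4) hl1ge
    rw [Real.log_div (ne_of_gt hL1pos) (by norm_num), ← hL2def, ← hl2def] at h
    linarith [hL2ge, hlog16]
  -- Lower bound chain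
  have hl2lel1 : l2 ≤ l1 := by rw [hl2def]; exact Real.log_le_self hl1pos.le
  have hl1le : l1 ≤ 1 / x := by rw [hl1def]; exact Real.log_le_self (by positivity)
  have hxgeu : u / C₀ ≤ x := by
    have hx2l : x ^ 2 * l2 ≤ x := by
      calc x ^ 2 * l2 ≤ x ^ 2 * (1 / x) :=
          mul_le_mul_of_nonneg_left (le_trans hl2lel1 hl1le) (by positivity)
        _ = x := by field_simp [pow_two]
    linarith
  have hl1up : l1 ≤ 2 * L1 := by
    have hinv : 1 / x ≤ C₀ / u := by
      rw [div_le_div_iff₀ hx0 hu0]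
      have := (div_le_iff₀ hC0).mp hxgeu
      linarith
    have h := Real.log_le_log (by positivity) hinv
    rw [Real.log_div (ne_of_gt hC0) (ne_of_gt hu0), hlogu, ← hl1def] at h
    linarith
  have hl2up : l2 ≤ 2 * L2 := by
    have h := Real.log_le_log hl1pos hl1up
    rw [Real.log_mul (by norm_num) (ne_of_gt hL1pos), ← hL2def, ← hl2def] at h
    have hlog2 : Real.log 2 ≤ L2 :=
      le_trans (Real.log_le_log (by norm_num) (by norm_num)) hL2ge
    linarith
  -- Conclude
  constructor
  · -- lower bound
    have hx2low : (u / L2) / (2 * C₀) ≤ x ^ 2 := by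
      have h' : u / C₀ ≤ x ^ 2 * (2 * L2) := by nlinarith [sq_nonneg x]
      have h'' : u ≤ x ^ 2 * (2 * L2) * C₀ := (div_le_iff₀ hC0).mp h'
      rw [div_div, div_le_iff₀ (by positivity : (0:ℝ) < L2 * (2 * C₀))]
      nlinarith
    have heq : (1 / Real.sqrt (2 * C₀)) * Real.sqrt (u / L2)
        = Real.sqrt ((u / L2) / (2 * C₀)) := by
      rw [Real.sqrt_div' (u / L2) (by positivity : (0:ℝ) ≤ 2 * C₀)]
      ring
    rw [heq]
    calc Real.sqrt ((u / L2) / (2 * C₀)) ≤ Real.sqrt (x ^ 2) := Real.sqrt_le_sqrt hx2low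
      _ = x := Real.sqrt_sq hx0.le
  · -- upper bound
    have hx2up : x ^ 2 ≤ 2 * C₀ * (u / L2) := by
      have h : x ^ 2 * L2 ≤ 2 * C₀ * u := by nlinarith [sq_nonneg x]
      have := (le_div_iff₀ hL2pos).mpr h
      calc x ^ 2 = x ^ 2 * L2 / L2 := by field_simp
        _ ≤ 2 * C₀ * u / L2 := by gcongr
        _ = 2 * C₀ * (u / L2) := by ring
    have heq : Real.sqrt (2 * C₀) * Real.sqrt (u / L2) = Real.sqrt (2 * C₀ * (u / L2)) :=
      (Real.sqrt_mul (by positivity) _).symm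
    rw [heq]
    calc x = Real.sqrt (x ^ 2) := (Real.sqrt_sq hx0.le).symm
      _ ≤ Real.sqrt (2 * C₀ * (u / L2)) := Real.sqrt_le_sqrt hx2up

/-- The log-log blowup rate: if `-d/dt(λ² log log(1/λ)) ≍ 1` with constant `C₀`
and `λ(t) → 0` as `t → T⁻`, then near `T`,
`λ(t) ≍ ((T-t)/log log(1/(T-t)))^{1/2}`, with constants depending only on `C₀`. -/
theorem loglog_rate_from_modulation (C₀ : ℝ) (hC₀ : 1 ≤ C₀) :
    ∃ C₁ : ℝ, 1 ≤ C₁ ∧ ∃ δ : ℝ, 0 < δ ∧ δ < Real.exp (-Real.exp 1) ∧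
      ∀ (T : ℝ), 0 < T → ∀ (lam g' : ℝ → ℝ),
      (∀ t ∈ Set.Ico (0 : ℝ) T,
        0 < lam t ∧ lam t < Real.exp (-Real.exp 1)) →
      Filter.Tendsto lam (nhdsWithin T (Set.Iio T)) (nhds 0) →
      (∀ t ∈ Set.Ico (0 : ℝ) T,
        HasDerivWithinAt
          (fun τ => (lam τ) ^ 2 * Real.log (Real.log (1 / lam τ)))
          (g' t) (Set.Ico 0 T) t ∧
        1 / C₀ ≤ -g' t ∧ -g' t ≤ C₀) →
      ∀ t ∈ Set.Ico (0 : ℝ) T, T - t < δ →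
        (1 / C₁) * Real.sqrt ((T - t) / Real.log (Real.log (1 / (T - t)))) ≤ lam t ∧
        lam t ≤ C₁ * Real.sqrt ((T - t) / Real.log (Real.log (1 / (T - t)))) := by
  have hC0 : (0 : ℝ) < C₀ := by linarith
  refine ⟨Real.sqrt (2 * C₀), ?_, ?_⟩
  · rw [Real.one_le_sqrt]; linarith
  refine ⟨min (Real.exp (-16)) (Real.exp (-(2 * Real.log C₀))) / 2, by positivity, ?_, ?_⟩
  · have h16 : Real.exp (-16) < Real.exp (-Real.exp 1) := by
      apply Real.exp_lt_exp.mpr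
      have := Real.exp_one_lt_d9
      linarith
    have hmin : min (Real.exp (-16)) (Real.exp (-(2 * Real.log C₀))) / 2
        ≤ Real.exp (-16) / 2 := by gcongr; exact min_le_left _ _
    linarith [Real.exp_pos (-16)]
  · intro T hT lam g' hlam hlim hg t ht hδ
    set G : ℝ → ℝ := fun τ => (lam τ) ^ 2 * Real.log (Real.log (1 / lam τ)) with hGdef
    have hu0 : 0 < T - t := sub_pos.mpr ht.2
    have hIoo : Set.Ioo 0 T ∈ nhdsWithin T (Set.Iio T) :=
      Ioo_mem_nhdsLT_of_mem ⟨hT, le_refl T⟩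
    have hGlim : Filter.Tendsto G (nhdsWithin T (Set.Iio T)) (nhds 0) := by
      apply tendsto_of_tendsto_of_tendsto_of_le_of_le' tendsto_const_nhds hlim
      · filter_upwards [hIoo] with s hs
        obtain ⟨ha, hb⟩ := hlam s ⟨hs.1.le, hs.2⟩
        exact (loglog_squeeze ha hb).1
      · filter_upwards [hIoo] with s hs
        obtain ⟨ha, hb⟩ := hlam s ⟨hs.1.le, hs.2⟩
        exact (loglog_squeeze ha hb).2
    have hconv : Convex ℝ (Set.Ico (0:ℝ) T) := convex_Ico 0 T
    have hcont : ContinuousOn G (Set.Ico (0:ℝ) T) := fun τ hτ =>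
      ((hg τ hτ).1).continuousWithinAt
    have hderivAt : ∀ τ ∈ Set.Ioo (0:ℝ) T, HasDerivAt G (g' τ) τ := fun τ hτ =>
      ((hg τ ⟨hτ.1.le, hτ.2⟩).1).hasDerivAt (Ico_mem_nhds hτ.1 hτ.2)
    have hdiff : DifferentiableOn ℝ G (interior (Set.Ico (0:ℝ) T)) := by
      rw [interior_Ico]
      exact fun τ hτ => (hderivAt τ hτ).differentiableAt.differentiableWithinAt
    have hderiv_le : ∀ τ ∈ interior (Set.Ico (0:ℝ) T), deriv G τ ≤ -(1/C₀) := by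
      rw [interior_Ico]; intro τ hτ
      rw [(hderivAt τ hτ).deriv]
      have := (hg τ ⟨hτ.1.le, hτ.2⟩).2.1; linarith
    have hderiv_ge : ∀ τ ∈ interior (Set.Ico (0:ℝ) T), -C₀ ≤ deriv G τ := by
      rw [interior_Ico]; intro τ hτ
      rw [(hderivAt τ hτ).deriv]
      have := (hg τ ⟨hτ.1.le, hτ.2⟩).2.2; linarith
    have hub : ∀ s ∈ Set.Ioo t T, G s - G t ≤ -(1/C₀) * (s - t) := fun s hs =>
      hconv.image_sub_le_mul_sub_of_deriv_le hcont hdiff hderiv_le t ht s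
        ⟨le_trans ht.1 hs.1.le, hs.2⟩ hs.1.le
    have hlb : ∀ s ∈ Set.Ioo t T, -C₀ * (s - t) ≤ G s - G t := fun s hs =>
      hconv.mul_sub_le_image_sub_of_le_deriv hcont hdiff hderiv_ge t ht s
        ⟨le_trans ht.1 hs.1.le, hs.2⟩ hs.1.le
    have hIoo_t : Set.Ioo t T ∈ nhdsWithin T (Set.Iio T) :=
      Ioo_mem_nhdsLT_of_mem ⟨ht.2, le_refl T⟩
    have hge : (T - t) / C₀ ≤ G t := by
      have htend : Filter.Tendsto (fun s => G t + -(1/C₀) * (s - t))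
          (nhdsWithin T (Set.Iio T)) (nhds (G t + -(1/C₀) * (T - t))) :=
        ((continuous_const.add (continuous_const.mul
          (continuous_id.sub continuous_const))).tendsto T).mono_left nhdsWithin_le_nhds
      have h0 := le_of_tendsto_of_tendsto hGlim htend ?_
      · have : (1/C₀) * (T - t) = (T - t) / C₀ := by ring
        linarith
      · filter_upwards [hIoo_t] with s hs
        have := hub s hs; linarith
    have hle : G t ≤ C₀ * (T - t) := by
      have htend : Filter.Tendsto (fun s => G t + -C₀ * (s - t))
          (nhdsWithin T (Set.Iio T)) (nhds (G t + -C₀ * (T - t))) :=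
        ((continuous_const.add (continuous_const.mul
          (continuous_id.sub continuous_const))).tendsto T).mono_left nhdsWithin_le_nhds
      have h0 := le_of_tendsto_of_tendsto htend hGlim ?_
      · linarith
      · filter_upwards [hIoo_t] with s hs
        have := hlb s hs; linarith
    obtain ⟨hlam0, hlam1⟩ := hlam t ht
    have hδ' : T - t < min (Real.exp (-16)) (Real.exp (-(2 * Real.log C₀))) :=
      lt_of_lt_of_le hδ (le_of_lt (half_lt_self (by positivity)))
    have hδ1 : T - t < Real.exp (-16) := lt_of_lt_of_le hδ' (min_le_left _ _)
    have hδ2 : T - t < Real.exp (-(2 * Real.log C₀)) := lt_of_lt_of_le hδ' (min_le_right _ _)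
    have hL16 : 16 ≤ Real.log (1 / (T - t)) := by
      have := (Real.log_lt_iff_lt_exp hu0).mpr hδ1
      rw [one_div, Real.log_inv]; linarith
    have hLC2 : 2 * Real.log C₀ ≤ Real.log (1 / (T - t)) := by
      have := (Real.log_lt_iff_lt_exp hu0).mpr hδ2
      rw [one_div, Real.log_inv]; linarith
    exact invert_step C₀ (lam t) (T - t) hC₀ hlam0 hlam1 hu0 hL16 hLC2 hge hle
end
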